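/- arXiv:1104.3592 — 4 statements merged into one kernel-verified Lean document; each statement's English description precedes it below -/
import Mathlib

section
/- Let H ∈ C²(0,∞) have a local minimum at w̄ with H'(w̄)=0 and H''(w̄) > 0, and suppose H is strictly decreasing on (0, w̄) and strictly increasing just above w̄. For E slightly above H(w̄), with w₁(E) < w̄ < w₂(E) the points where H = E, the period integral T(E) = ∫_{w₁(E)}^{w₂(E)} dy/√(2(E − H(y))) satisfies lim_{E → H(w̄)⁺} T(E) = π/√(H''(w̄)). -/
/-!
Let `A = H''(w̄)`. For small `η > 0`, `A - η ≤ H'' ≤ A + η` near `w̄`, so on each half of the well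
`w̄ ≤ y ≤ w` (with `H w = E`) the quantity `2 (E - H y)` lies between `(A ∓ η) ((w - w̄)² - (y - w̄)²)`.
The inverse square root of `(w - w̄)² - (y - w̄)²` integrates to `π / 2` (an arcsine), hence
`π / √(A + η) ≤ T(E) ≤ π / √(A - η)` for all `E` close enough to `H w̄`, and `η → 0` gives the limit.
-/

open Filter Set Real MeasureTheory Topology

theorem tendsto_of_eventually_mem_Icc {α ι β : Type*} [TopologicalSpace β] [LinearOrder β]
    [OrderTopology β] {l : Filter α} {p : Filter ι} [p.NeBot] {f : α → β} {L U : ι → β} {b : β}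
    (hL : Tendsto L p (𝓝 b)) (hU : Tendsto U p (𝓝 b))
    (h : ∀ᶠ i in p, ∀ᶠ a in l, f a ∈ Icc (L i) (U i)) : Tendsto f l (𝓝 b) := by
  refine tendsto_order.2 ⟨fun c hc => ?_, fun c hc => ?_⟩
  · obtain ⟨i, hi, hci⟩ := (h.and (hL.eventually (eventually_gt_nhds hc))).exists
    exact hi.mono fun a ha => hci.trans_le ha.1
  · obtain ⟨i, hi, hci⟩ := (h.and (hU.eventually (eventually_lt_nhds hc))).exists
    exact hi.mono fun a ha => ha.2.trans_lt hci

theorem monotoneOn_sub_mul_sq {f f' f'' : ℝ → ℝ} {m w k : ℝ}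
    (hf : ∀ x ∈ Icc m w, HasDerivAt f (f' x) x) (hf' : ∀ x ∈ Icc m w, HasDerivAt f' (f'' x) x)
    (hm : f' m = 0) (hk : ∀ x ∈ Icc m w, k ≤ f'' x) :
    MonotoneOn (fun x => f x - k * (x - m) ^ 2 / 2) (Icc m w) := by
  have hslope : ∀ x ∈ Icc m w, HasDerivAt (fun x => f' x - k * (x - m)) (f'' x - k) x :=
    fun x hx => ((hf' x hx).fun_sub (((hasDerivAt_id' x).sub_const m).const_mul k)).congr_deriv
      (by ring)
  have hslope_mono : MonotoneOn (fun x => f' x - k * (x - m)) (Icc m w) :=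
    monotoneOn_of_hasDerivWithinAt_nonneg (convex_Icc m w) (HasDerivAt.continuousOn hslope)
      (fun x hx => (hslope x (interior_subset hx)).hasDerivWithinAt)
      (fun x hx => sub_nonneg.2 (hk x (interior_subset hx)))
  have hφ : ∀ x ∈ Icc m w, HasDerivAt (fun x => f x - k * (x - m) ^ 2 / 2) (f' x - k * (x - m)) x :=
    fun x hx => ((hf x hx).fun_sub ((((hasDerivAt_id' x).sub_const m).fun_pow 2).const_mul k
      |>.div_const 2)).congr_deriv (by ring)
  refine monotoneOn_of_hasDerivWithinAt_nonneg (convex_Icc m w) (HasDerivAt.continuousOn hφ)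
    (fun x hx => (hφ x (interior_subset hx)).hasDerivWithinAt) fun x hx => ?_
  rw [interior_Icc] at hx
  have := hslope_mono ⟨le_rfl, hx.1.le.trans hx.2.le⟩ (Ioo_subset_Icc_self hx) hx.1.le
  simpa [hm] using this

theorem hasDerivAt_arcsin_sub_div {m ρ y : ℝ} (hρ : 0 < ρ) (hy : |y - m| < ρ) :
    HasDerivAt (fun y => arcsin ((y - m) / ρ)) (√(ρ ^ 2 - (y - m) ^ 2))⁻¹ y := by
  obtain ⟨hlo, hhi⟩ := abs_lt.1 hy
  have hsq : ρ ^ 2 - (y - m) ^ 2 = ρ ^ 2 * (1 - ((y - m) / ρ) ^ 2) := by field_simp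
  have harcsin := hasDerivAt_arcsin (x := (y - m) / ρ)
    (by rw [ne_eq, div_eq_iff hρ.ne']; linarith) (by rw [ne_eq, div_eq_iff hρ.ne']; linarith)
  refine (harcsin.comp y (((hasDerivAt_id' y).sub_const m).div_const ρ)).congr_deriv ?_
  rw [hsq, sqrt_mul (sq_nonneg ρ), sqrt_sq hρ.le]
  field_simp

theorem integral_inv_sqrt_sq_sub_sq {m w : ℝ} (hmw : m < w) :
    IntervalIntegrable (fun y => (√((w - m) ^ 2 - (y - m) ^ 2))⁻¹) volume m w ∧
      ∫ y in m..w, (√((w - m) ^ 2 - (y - m) ^ 2))⁻¹ = π / 2 := by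
  have hρ : 0 < w - m := sub_pos.2 hmw
  have hcont : ContinuousOn (fun y => arcsin ((y - m) / (w - m))) (Icc m w) := by fun_prop
  have hderiv : ∀ y ∈ Ioo m w,
      HasDerivAt (fun y => arcsin ((y - m) / (w - m))) (√((w - m) ^ 2 - (y - m) ^ 2))⁻¹ y :=
    fun y hy => hasDerivAt_arcsin_sub_div hρ (abs_lt.2 ⟨by linarith [hy.1], by linarith [hy.2]⟩)
  have hint : IntervalIntegrable (fun y => (√((w - m) ^ 2 - (y - m) ^ 2))⁻¹) volume m w :=
    intervalIntegral.intervalIntegrable_deriv_of_nonneg (by rwa [uIcc_of_le hmw.le])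
      (by simpa [hmw.le] using hderiv) fun _ _ => by positivity
  refine ⟨hint, ?_⟩
  rw [intervalIntegral.integral_eq_sub_of_hasDerivAt_of_le hmw.le hcont hderiv hint]
  simp [div_self hρ.ne']

theorem IntervalIntegrable.inv_sqrt_of_mul_le {f g : ℝ → ℝ} {p q k : ℝ} (hpq : p ≤ q)
    (hk : 0 < k) (hf : ContinuousOn f (Icc p q)) (hg : ∀ y ∈ Ioo p q, 0 < g y)
    (hgf : ∀ y ∈ Ioo p q, k * g y ≤ f y)
    (hgi : IntervalIntegrable (fun y => (√(g y))⁻¹) volume p q) :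
    IntervalIntegrable (fun y => (√(f y))⁻¹) volume p q := by
  have hmeas : AEStronglyMeasurable (fun y => (√(f y))⁻¹) (volume.restrict (uIoc p q)) := by
    rw [uIoc_of_le hpq]
    exact ((by fun_prop : Measurable fun t : ℝ => (√t)⁻¹).comp_aemeasurable
      ((hf.mono Ioc_subset_Icc_self).aestronglyMeasurable measurableSet_Ioc).aemeasurable
      ).aestronglyMeasurable
  refine (hgi.const_mul (√k)⁻¹).mono_fun hmeas ?_
  rw [uIoc_of_le hpq, ← Measure.restrict_congr_set Ioo_ae_eq_Ioc]
  refine (ae_restrict_iff' measurableSet_Ioo).2 (ae_of_all _ fun y hy => ?_)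
  dsimp only
  rw [norm_of_nonneg (by positivity), norm_of_nonneg (by positivity), ← mul_inv,
    ← sqrt_mul hk.le]
  exact inv_anti₀ (sqrt_pos.2 (mul_pos hk (hg y hy))) (sqrt_le_sqrt (hgf y hy))

theorem integral_inv_sqrt_mem_Icc {f g : ℝ → ℝ} {p q k₁ k₂ : ℝ} (hpq : p ≤ q) (hk₁ : 0 < k₁)
    (hk₂ : 0 < k₂) (hg : ∀ y ∈ Ioo p q, 0 < g y) (h₁ : ∀ y ∈ Ioo p q, k₁ * g y ≤ f y)
    (h₂ : ∀ y ∈ Ioo p q, f y ≤ k₂ * g y)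
    (hfi : IntervalIntegrable (fun y => (√(f y))⁻¹) volume p q)
    (hgi : IntervalIntegrable (fun y => (√(g y))⁻¹) volume p q) :
    ∫ y in p..q, (√(f y))⁻¹ ∈
      Icc ((∫ y in p..q, (√(g y))⁻¹) / √k₂) ((∫ y in p..q, (√(g y))⁻¹) / √k₁) := by
  have hsplit : ∀ k, 0 < k → (fun y => (√(k * g y))⁻¹) = fun y => (√k)⁻¹ * (√(g y))⁻¹ :=
    fun k hk => funext fun y => by rw [sqrt_mul hk.le, mul_inv]
  have hscale : ∀ k, 0 < k →
      ∫ y in p..q, (√(k * g y))⁻¹ = (∫ y in p..q, (√(g y))⁻¹) / √k := fun k hk => by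
    rw [hsplit k hk, intervalIntegral.integral_const_mul, inv_mul_eq_div]
  refine ⟨?_, ?_⟩
  · rw [← hscale k₂ hk₂]
    refine intervalIntegral.integral_mono_on_of_le_Ioo hpq (hsplit k₂ hk₂ ▸ hgi.const_mul _)
      hfi fun y hy => ?_
    exact inv_anti₀ (sqrt_pos.2 (by linarith [h₁ y hy, mul_pos hk₁ (hg y hy)]))
      (sqrt_le_sqrt (h₂ y hy))
  · rw [← hscale k₁ hk₁]
    refine intervalIntegral.integral_mono_on_of_le_Ioo hpq hfi
      (hsplit k₁ hk₁ ▸ hgi.const_mul _) fun y hy => ?_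
    exact inv_anti₀ (sqrt_pos.2 (mul_pos hk₁ (hg y hy))) (sqrt_le_sqrt (h₁ y hy))

theorem halfPeriod_mem_Icc {H H' H'' : ℝ → ℝ} {m r k₁ k₂ E w : ℝ} (hr : 0 < r) (hk₁ : 0 < k₁)
    (hH : ∀ x ∈ Icc m (m + r), HasDerivAt H (H' x) x)
    (hH' : ∀ x ∈ Icc m (m + r), HasDerivAt H' (H'' x) x)
    (hm : H' m = 0) (hk : ∀ x ∈ Icc m (m + r), H'' x ∈ Icc k₁ k₂)
    (hE : E ≤ H m + k₁ * r ^ 2 / 2) (hmw : m < w) (hHw : H w = E)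
    (hlt : ∀ y ∈ Ioo m w, H y < E) :
    IntervalIntegrable (fun y => (√(2 * (E - H y)))⁻¹) volume m w ∧
      ∫ y in m..w, (√(2 * (E - H y)))⁻¹ ∈ Icc (π / 2 / √k₂) (π / 2 / √k₁) := by
  have hk₂ : 0 < k₂ := by
    have := hk m ⟨le_rfl, by linarith⟩
    exact hk₁.trans_le (this.1.trans this.2)
  have hmono₁ := monotoneOn_sub_mul_sq hH hH' hm fun x hx => (hk x hx).1
  have hmono₂ := monotoneOn_sub_mul_sq (k := -k₂) (fun x hx => (hH x hx).fun_neg)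
    (fun x hx => (hH' x hx).fun_neg) (by simp [hm]) fun x hx => neg_le_neg (hk x hx).2
  -- `H (m + r) ≥ H m + k₁ r² / 2 ≥ E`, so the turning point `w` cannot lie beyond `m + r`
  have hwr : w ≤ m + r := by
    by_contra! hrw
    have h₁ := hmono₁ ⟨le_rfl, by linarith⟩ ⟨by linarith, le_rfl⟩ (by linarith : m ≤ m + r)
    have h₂ := hlt (m + r) ⟨by linarith, hrw⟩
    simp only [sub_self, add_sub_cancel_left] at h₁
    nlinarith
  have hIcc : ∀ y ∈ Ioo m w, y ∈ Icc m (m + r) := fun y hy => ⟨hy.1.le, by linarith [hy.2]⟩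
  have hw : w ∈ Icc m (m + r) := ⟨hmw.le, hwr⟩
  set g : ℝ → ℝ := fun y => (w - m) ^ 2 - (y - m) ^ 2 with hg_def
  have hg : ∀ y ∈ Ioo m w, 0 < g y := fun y hy => by
    simp only [hg_def]; nlinarith [hy.1, hy.2]
  have hlow : ∀ y ∈ Ioo m w, k₁ * g y ≤ 2 * (E - H y) := fun y hy => by
    have := hmono₁ (hIcc y hy) hw hy.2.le
    simp only [hg_def] at this ⊢; linarith
  have hupp : ∀ y ∈ Ioo m w, 2 * (E - H y) ≤ k₂ * g y := fun y hy => by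
    have := hmono₂ (hIcc y hy) hw hy.2.le
    simp only [hg_def] at this ⊢; linarith
  obtain ⟨hgi, hgv⟩ := integral_inv_sqrt_sq_sub_sq hmw
  have hHc : ContinuousOn H (Icc m w) :=
    HasDerivAt.continuousOn fun x hx => hH x ⟨hx.1, hx.2.trans hwr⟩
  have hfi : IntervalIntegrable (fun y => (√(2 * (E - H y)))⁻¹) volume m w :=
    hgi.inv_sqrt_of_mul_le hmw.le hk₁ (by fun_prop) hg hlow
  refine ⟨hfi, ?_⟩
  have := integral_inv_sqrt_mem_Icc hmw.le hk₁ hk₂ hg hlow hupp hfi hgi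
  rwa [hgv] at this

theorem period_mem_Icc {H H' H'' : ℝ → ℝ} {m r k₁ k₂ E w₁ w₂ : ℝ} (hr : 0 < r) (hk₁ : 0 < k₁)
    (hH : ∀ x ∈ Icc (m - r) (m + r), HasDerivAt H (H' x) x)
    (hH' : ∀ x ∈ Icc (m - r) (m + r), HasDerivAt H' (H'' x) x)
    (hm : H' m = 0) (hk : ∀ x ∈ Icc (m - r) (m + r), H'' x ∈ Icc k₁ k₂)
    (hE : E ≤ H m + k₁ * r ^ 2 / 2) (hw₁ : w₁ < m) (hw₂ : m < w₂)
    (hHw₁ : H w₁ = E) (hHw₂ : H w₂ = E) (hlt : ∀ y ∈ Ioo w₁ w₂, H y < E) :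
    ∫ y in w₁..w₂, (√(2 * (E - H y)))⁻¹ ∈ Icc (π / √k₂) (π / √k₁) := by
  have hright : ∀ x ∈ Icc m (m + r), x ∈ Icc (m - r) (m + r) :=
    fun x hx => ⟨by linarith [hx.1], hx.2⟩
  have hleft : ∀ x ∈ Icc m (m + r), 2 * m - x ∈ Icc (m - r) (m + r) :=
    fun x hx => ⟨by linarith [hx.2], by linarith [hx.1]⟩
  obtain ⟨hi₂, hb₂⟩ := halfPeriod_mem_Icc hr hk₁ (fun x hx => hH x (hright x hx))
    (fun x hx => hH' x (hright x hx)) hm (fun x hx => hk x (hright x hx)) hE hw₂ hHw₂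
    fun y hy => hlt y ⟨hw₁.trans hy.1, hy.2⟩
  -- the left half is the right half of the reflected potential `x ↦ H (2m - x)`
  obtain ⟨hi₁, hb₁⟩ := halfPeriod_mem_Icc (H := fun x => H (2 * m - x))
    (H' := fun x => -H' (2 * m - x)) (H'' := fun x => H'' (2 * m - x)) (w := 2 * m - w₁) hr hk₁
    (fun x hx => (hH _ (hleft x hx)).comp_const_sub (2 * m) x)
    (fun x hx => by simpa using ((hH' _ (hleft x hx)).comp_const_sub (2 * m) x).fun_neg)
    (by simp [two_mul, hm]) (fun x hx => hk _ (hleft x hx)) (by simpa [two_mul] using hE)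
    (by linarith) (by simpa using hHw₁)
    fun y hy => hlt _ ⟨by linarith [hy.2], by linarith [hy.1]⟩
  have h2m : 2 * m - m = m := by ring
  rw [intervalIntegral.integral_comp_sub_left (fun y => (√(2 * (E - H y)))⁻¹), sub_sub_cancel,
    h2m] at hb₁
  have hi₁' : IntervalIntegrable (fun y => (√(2 * (E - H y)))⁻¹) volume w₁ m := by
    simpa only [sub_sub_cancel, h2m] using (hi₁.comp_sub_left (2 * m)).symm
  rw [← intervalIntegral.integral_add_adjacent_intervals hi₁' hi₂]
  have hhalves : ∀ k, π / √k = π / 2 / √k + π / 2 / √k := fun k => by ring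
  rw [hhalves k₁, hhalves k₂]
  exact ⟨add_le_add hb₁.1 hb₂.1, add_le_add hb₁.2 hb₂.2⟩

theorem ContDiffOn.hasDerivAt_deriv_deriv {f : ℝ → ℝ} {s : Set ℝ} (hf : ContDiffOn ℝ 2 f s)
    (hs : IsOpen s) {x : ℝ} (hx : x ∈ s) :
    HasDerivAt f (deriv f x) x ∧ HasDerivAt (deriv f) (deriv (deriv f) x) x ∧
      ContinuousAt (deriv (deriv f)) x := by
  have hf' : ContDiffOn ℝ 1 (deriv f) s :=
    ((contDiffOn_succ_iff_deriv_of_isOpen (n := 1) hs).1 hf).2.2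
  exact ⟨((hf.differentiableOn (by norm_num) x hx).differentiableAt (hs.mem_nhds hx)).hasDerivAt,
    ((hf'.differentiableOn one_ne_zero x hx).differentiableAt (hs.mem_nhds hx)).hasDerivAt,
    (hf'.continuousOn_deriv_of_isOpen hs le_rfl).continuousAt (hs.mem_nhds hx)⟩

theorem stmt7_general (H : ℝ → ℝ) (wb : ℝ) (hwb : 0 < wb)
    (hC2 : ContDiffOn ℝ 2 H (Set.Ioi 0))
    (hd0 : deriv H wb = 0) (hdd : 0 < deriv (deriv H) wb)
    (w1 w2 : ℝ → ℝ) (δ : ℝ) (hδ : 0 < δ)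
    (hw : ∀ E ∈ Set.Ioo (H wb) (H wb + δ),
      0 < w1 E ∧ w1 E < wb ∧ wb < w2 E ∧
      H (w1 E) = E ∧ H (w2 E) = E ∧
      deriv H (w1 E) ≠ 0 ∧ deriv H (w2 E) ≠ 0 ∧
      ∀ y ∈ Set.Ioo (w1 E) (w2 E), H y < E) :
    Filter.Tendsto
      (fun E => ∫ y in (w1 E)..(w2 E), (Real.sqrt (2 * (E - H y)))⁻¹)
      (nhdsWithin (H wb) (Set.Ioi (H wb)))
      (nhds (Real.pi / Real.sqrt (deriv (deriv H) wb))) := by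
  set A := deriv (deriv H) wb
  have hderiv := fun x (hx : x ∈ Ioi (0 : ℝ)) => hC2.hasDerivAt_deriv_deriv isOpen_Ioi hx
  have hsqrtA : √(A + 0) ≠ 0 := by simpa using (sqrt_pos.2 hdd).ne'
  refine tendsto_of_eventually_mem_Icc (p := 𝓝[>] 0) (L := fun η => π / √(A + η))
    (U := fun η => π / √(A - η)) ?_ ?_ ?_
  · have : ContinuousAt (fun η => π / √(A + η)) 0 := by fun_prop (disch := exact hsqrtA)
    simpa using this.tendsto.mono_left nhdsWithin_le_nhds
  · have : ContinuousAt (fun η => π / √(A - η)) 0 := by fun_prop (disch := simpa using hsqrtA)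
    simpa using this.tendsto.mono_left nhdsWithin_le_nhds
  filter_upwards [Ioo_mem_nhdsGT hdd] with η hη
  obtain ⟨r, hr, hball⟩ := Metric.nhds_basis_closedBall.eventually_iff.1
    (((hderiv wb hwb).2.2.eventually (Icc_mem_nhds (by linarith [hη.1] : A - η < A)
      (by linarith [hη.1] : A < A + η))).and (Ioi_mem_nhds hwb))
  simp only [closedBall_eq_Icc] at hball
  filter_upwards [Ioo_mem_nhdsGT (lt_add_of_pos_right (H wb)
    (lt_min hδ (by have := sub_pos.2 hη.2; positivity : 0 < (A - η) * r ^ 2 / 2)))]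
    with E hE
  obtain ⟨-, hw₁, hw₂, hHw₁, hHw₂, -, -, hlt⟩ :=
    hw E ⟨hE.1, hE.2.trans_le (add_le_add_right (min_le_left _ _) _)⟩
  exact period_mem_Icc hr (sub_pos.2 hη.2) (fun x hx => (hderiv x (hball hx).2).1)
    (fun x hx => (hderiv x (hball hx).2).2.1) hd0 (fun x hx => (hball hx).1)
    (by linarith [hE.2, min_le_right δ ((A - η) * r ^ 2 / 2)]) hw₁ hw₂ hHw₁ hHw₂ hlt

/-- As the energy `E` decreases to the local minimum value `H(w̄)`, the period integral
`T(E) = ∫_{w₁(E)}^{w₂(E)} dy/√(2(E − H(y)))` converges to `π/√(H''(w̄))`. -/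
theorem stmt7 (H : ℝ → ℝ) (wb : ℝ) (hwb : 0 < wb)
    (hC2 : ContDiffOn ℝ 2 H (Set.Ioi 0))
    (hd0 : deriv H wb = 0) (hdd : 0 < deriv (deriv H) wb)
    (hanti : StrictAntiOn H (Set.Ioo 0 wb))
    (hmono : ∃ ε > 0, StrictMonoOn H (Set.Ico wb (wb + ε)))
    (w1 w2 : ℝ → ℝ) (δ : ℝ) (hδ : 0 < δ)
    (hw : ∀ E ∈ Set.Ioo (H wb) (H wb + δ),
      0 < w1 E ∧ w1 E < wb ∧ wb < w2 E ∧
      H (w1 E) = E ∧ H (w2 E) = E ∧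
      deriv H (w1 E) ≠ 0 ∧ deriv H (w2 E) ≠ 0 ∧
      ∀ y ∈ Set.Ioo (w1 E) (w2 E), H y < E) :
    Filter.Tendsto
      (fun E => ∫ y in (w1 E)..(w2 E), (Real.sqrt (2 * (E - H y)))⁻¹)
      (nhdsWithin (H wb) (Set.Ioi (H wb)))
      (nhds (Real.pi / Real.sqrt (deriv (deriv H) wb))) :=
  stmt7_general H wb hwb hC2 hd0 hdd w1 w2 δ hδ hw
end

section
/- Let a > d_c > 0, d_b, d, K_w, M > 0 with M K_w (1 + d_c/a)² ≤ (d_b + d)(d_c/a)². Suppose u, v : [0,∞) → [0,∞) are C¹ and w : [0,∞) → [0, K_w] satisfy u' ≤ a v − d_c u, v' = −(d_b+d) v + u² w, with u(0) ≤ M and v(0) < (d_c/a)² M. Then u(t) < M(1 + d_c/a) and v(t) < (d_c/a)² M for all t > 0. -/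
/-!
A solution of `f' ≤ c - k f` with `k > 0` stays below `max (f 0) (c / k)`. While
`v < (d_c/a)² M`, this keeps `u` below `max (u 0) ((d_c/a) M) ≤ M`; then
`v' ≤ -(d_b + d) v + M² K_w` keeps `v` below `max (v 0) (M² K_w / (d_b + d))`, which the parameter
condition puts strictly below `(d_c/a)² M`. So `v` can never reach that level for a first time.
-/

open Set

theorem forall_lt_of_forall_Ico_lt {f : ℝ → ℝ} {a B : ℝ} (hf : ContinuousOn f (Ici a))
    (step : ∀ t, a ≤ t → (∀ s ∈ Ico a t, f s < B) → f t < B) : ∀ t, a ≤ t → f t < B := by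
  by_contra! ⟨t, hat, hBt⟩
  have hclosed : IsClosed (Icc a t ∩ f ⁻¹' Ici B) :=
    (hf.mono Icc_subset_Ici_self).preimage_isClosed_of_isClosed isClosed_Icc isClosed_Ici
  obtain ⟨c, ⟨⟨hac, hct⟩, hBc⟩, hleast⟩ :=
    (isCompact_Icc.of_isClosed_subset hclosed inter_subset_left).exists_isLeast
      ⟨t, right_mem_Icc.mpr hat, hBt⟩
  refine (step c hac fun s hs => ?_).not_ge hBc
  by_contra! hBs
  exact (hleast ⟨⟨hs.1, hs.2.le.trans hct⟩, hBs⟩).not_gt hs.2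

theorem le_max_of_deriv_le_sub_mul {f : ℝ → ℝ} {k c a b : ℝ} (hk : 0 < k) (hab : a ≤ b)
    (hf : ContinuousOn f (Icc a b)) (hdiff : ∀ t ∈ Ioo a b, DifferentiableAt ℝ f t)
    (hderiv : ∀ t ∈ Ioo a b, deriv f t ≤ c - k * f t) : f b ≤ max (f a) (c / k) := by
  -- integrating factor
  set g : ℝ → ℝ := fun t => (f t - c / k) * Real.exp (k * t)
  have hg : ∀ t ∈ Ioo a b,
      HasDerivAt g ((deriv f t - (c - k * f t)) * Real.exp (k * t)) t := by
    intro t ht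
    have hexp : HasDerivAt (fun s => Real.exp (k * s)) (Real.exp (k * t) * k) t := by
      simpa using ((hasDerivAt_id t).const_mul k).exp
    refine (((hdiff t ht).hasDerivAt.sub_const (c / k)).mul hexp).congr_deriv ?_
    field_simp
    ring
  have hanti : AntitoneOn g (Icc a b) := by
    refine antitoneOn_of_deriv_nonpos (convex_Icc a b) ?_ ?_ ?_
    · exact (hf.sub continuousOn_const).mul (by fun_prop)
    · rw [interior_Icc]
      exact fun t ht => (hg t ht).differentiableAt.differentiableWithinAt
    · rw [interior_Icc]
      intro t ht
      rw [(hg t ht).deriv]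
      exact mul_nonpos_of_nonpos_of_nonneg (sub_nonpos.mpr (hderiv t ht)) (Real.exp_pos _).le
  have hgab : g b ≤ g a := hanti (left_mem_Icc.mpr hab) (right_mem_Icc.mpr hab) hab
  have hscaled :
      (f b - c / k) * Real.exp (k * b) ≤ (max (f a) (c / k) - c / k) * Real.exp (k * b) :=
    calc (f b - c / k) * Real.exp (k * b) ≤ (f a - c / k) * Real.exp (k * a) := hgab
      _ ≤ (max (f a) (c / k) - c / k) * Real.exp (k * a) := by gcongr; exact le_max_left _ _
      _ ≤ (max (f a) (c / k) - c / k) * Real.exp (k * b) := by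
        gcongr; exact sub_nonneg.mpr (le_max_right _ _)
  linarith [le_of_mul_le_mul_right hscaled (Real.exp_pos _)]

theorem mul_div_sq_mul_div_le {a d M : ℝ} (hda : d < a) (hd : 0 < d) (hM : 0 ≤ M) :
    a * ((d / a) ^ 2 * M) / d ≤ M := by
  have ha : 0 < a := hd.trans hda
  have h : a * ((d / a) ^ 2 * M) / d = d / a * M := by field_simp
  rw [h]
  exact mul_le_of_le_one_left hM ((div_le_one ha).mpr hda.le)

theorem sq_mul_div_lt_of_mul_one_add_sq_le {M K l ε : ℝ} (hM : 0 < M) (hK : 0 < K) (hl : 0 < l)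
    (hε : 0 < ε) (h : M * K * (1 + ε) ^ 2 ≤ l * ε ^ 2) : M ^ 2 * K / l < ε ^ 2 * M := by
  have hMK : M * K < l * ε ^ 2 :=
    lt_of_lt_of_le (lt_mul_of_one_lt_right (by positivity) (by nlinarith)) h
  rw [div_lt_iff₀ hl]
  nlinarith [mul_lt_mul_of_pos_left hMK hM]

theorem stmt12_general (a d_c d_b d K_w M : ℝ)
    (ha : d_c < a) (hdc : 0 < d_c) (hdb : 0 < d_b) (hd : 0 < d)
    (hKw : 0 < K_w) (hM : 0 < M)
    (hpar : M * K_w * (1 + d_c / a) ^ 2 ≤ (d_b + d) * (d_c / a) ^ 2)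
    (u v w : ℝ → ℝ)
    (hu0 : ∀ t, 0 ≤ t → 0 ≤ u t)
    (hw : ∀ t, 0 ≤ t → 0 ≤ w t ∧ w t ≤ K_w)
    (hud : ∀ t, 0 ≤ t → DifferentiableAt ℝ u t)
    (hvd : ∀ t, 0 ≤ t → DifferentiableAt ℝ v t)
    (hu' : ∀ t, 0 ≤ t → deriv u t ≤ a * v t - d_c * u t)
    (hv' : ∀ t, 0 ≤ t → deriv v t = -(d_b + d) * v t + (u t) ^ 2 * w t)
    (hui : u 0 ≤ M) (hvi : v 0 < (d_c / a) ^ 2 * M) :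
    ∀ t, 0 < t → u t < M * (1 + d_c / a) ∧ v t < (d_c / a) ^ 2 * M := by
  set B := (d_c / a) ^ 2 * M
  have ha₀ : 0 < a := hdc.trans ha
  have hu_le : ∀ T, 0 ≤ T → (∀ s ∈ Ico 0 T, v s < B) → u T ≤ M := fun T hT hv =>
    calc u T ≤ max (u 0) (a * B / d_c) :=
          le_max_of_deriv_le_sub_mul hdc hT
            (fun t ht => (hud t ht.1).continuousAt.continuousWithinAt) (fun t ht => hud t ht.1.le)
            fun t ht =>
              (hu' t ht.1.le).trans <| sub_le_sub_right
                (mul_le_mul_of_nonneg_left (hv t ⟨ht.1.le, ht.2⟩).le ha₀.le) _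
      _ ≤ M := max_le hui (mul_div_sq_mul_div_le ha hdc hM.le)
  have hv_lt : ∀ T, 0 ≤ T → v T < B := by
    refine forall_lt_of_forall_Ico_lt (fun t ht => (hvd t ht).continuousAt.continuousWithinAt) ?_
    intro T hT hv
    have hsource : ∀ t ∈ Ioo 0 T, u t ^ 2 * w t ≤ M ^ 2 * K_w := fun t ht =>
      mul_le_mul (pow_le_pow_left₀ (hu0 t ht.1.le)
        (hu_le t ht.1.le fun s hs => hv s ⟨hs.1, hs.2.trans ht.2⟩) 2)
        (hw t ht.1.le).2 (hw t ht.1.le).1 (by positivity)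
    calc v T ≤ max (v 0) (M ^ 2 * K_w / (d_b + d)) :=
          le_max_of_deriv_le_sub_mul (by positivity) hT
            (fun t ht => (hvd t ht.1).continuousAt.continuousWithinAt) (fun t ht => hvd t ht.1.le)
            fun t ht => by rw [hv' t ht.1.le]; linarith [hsource t ht]
      _ < B := max_lt hvi
          (sq_mul_div_lt_of_mul_one_add_sq_le hM hKw (by positivity) (div_pos hdc ha₀) hpar)
  intro t ht
  refine ⟨?_, hv_lt t ht.le⟩
  calc u t ≤ M := hu_le t ht.le fun s hs => hv_lt s hs.1
    _ < M * (1 + d_c / a) := lt_mul_of_one_lt_right hM (lt_add_of_pos_right 1 (div_pos hdc ha₀))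

/-- Invariance estimate (Lemma 4.3): under the parameter condition
`M K_w (1 + d_c/a)² ≤ (d_b+d)(d_c/a)²`, solutions starting with `u(0) ≤ M`,
`v(0) < (d_c/a)² M` satisfy `u(t) < M(1 + d_c/a)` and `v(t) < (d_c/a)² M` for `t > 0`. -/
theorem stmt12 (a d_c d_b d K_w M : ℝ)
    (ha : d_c < a) (hdc : 0 < d_c) (hdb : 0 < d_b) (hd : 0 < d)
    (hKw : 0 < K_w) (hM : 0 < M)
    (hpar : M * K_w * (1 + d_c / a) ^ 2 ≤ (d_b + d) * (d_c / a) ^ 2)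
    (u v w : ℝ → ℝ)
    (hu0 : ∀ t, 0 ≤ t → 0 ≤ u t) (hv0 : ∀ t, 0 ≤ t → 0 ≤ v t)
    (hw : ∀ t, 0 ≤ t → 0 ≤ w t ∧ w t ≤ K_w)
    (hud : ∀ t, 0 ≤ t → DifferentiableAt ℝ u t)
    (hvd : ∀ t, 0 ≤ t → DifferentiableAt ℝ v t)
    (hu' : ∀ t, 0 ≤ t → deriv u t ≤ a * v t - d_c * u t)
    (hv' : ∀ t, 0 ≤ t → deriv v t = -(d_b + d) * v t + (u t) ^ 2 * w t)
    (hui : u 0 ≤ M) (hvi : v 0 < (d_c / a) ^ 2 * M) :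
    ∀ t, 0 < t → u t < M * (1 + d_c / a) ∧ v t < (d_c / a) ^ 2 * M :=
  stmt12_general a d_c d_b d K_w M ha hdc hdb hd hKw hM hpar u v w hu0 hw hud hvd hu' hv' hui hvi
end

section
/- Let a > d_c > 0, d_b, d, K_w, M > 0 satisfy M K_w (1 + d_c/a)² ≤ (d_b + d)(d_c/a)². Suppose u, v : [0,∞) → [0,∞) are C¹, w : [0,∞) → [0, K_w], u' ≤ a v − d_c u, u' = ((a v)/(u+v) − d_c) u, v' = −(d_b+d)v + u² w, u(0) ≤ M, v(0) < (d_c/a)² M. Then u(t) → 0 and v(t) → 0 as t → ∞. -/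
/-!
The box `u ≤ M`, `v ≤ (d_c / a) ^ 2 * M` is forward invariant: on the face `u = M` the bound
`u' ≤ a v - d_c u` forces `u' < 0`, and on the face `v = (d_c / a) ^ 2 * M` the parameter condition
forces `v' < 0`. Inside the box `u ^ 2 * w ≤ M K_w u`, so `(u, v)` is a subsolution of the
cooperative linear system with matrix `[[-d_c, a], [M K_w, -(d_b + d)]]`, which is stable since
`a M K_w < d_c (d_b + d)`; a positive linear functional of `(u, v)` then decays exponentially.
-/

open Filter Topology Set Real

theorem eventually_nhdsGT_le_of_deriv_neg {f : ℝ → ℝ} {x A : ℝ} (hf : DifferentiableAt ℝ f x)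
    (hle : f x ≤ A) (hA : f x = A → deriv f x < 0) : ∀ᶠ t in 𝓝[>] x, f t ≤ A := by
  rcases hle.lt_or_eq with hlt | heq
  · exact (hf.continuousAt.mono_left nhdsWithin_le_nhds |>.eventually_lt_const hlt).mono
      fun _ h ↦ h.le
  · filter_upwards [hf.hasDerivAt.hasDerivWithinAt.limsup_slope_le' (lt_irrefl x) (hA heq),
      self_mem_nhdsWithin] with t hslope hxt
    exact heq ▸ ((slope_neg_iff_of_le (le_of_lt hxt)).mp hslope).le

theorem le_and_le_of_deriv_neg_on_faces {f g : ℝ → ℝ} {A B t₀ : ℝ}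
    (hf : ∀ t ∈ Ici t₀, DifferentiableAt ℝ f t) (hg : ∀ t ∈ Ici t₀, DifferentiableAt ℝ g t)
    (hf₀ : f t₀ ≤ A) (hg₀ : g t₀ ≤ B)
    (hfA : ∀ t ∈ Ici t₀, f t = A → g t ≤ B → deriv f t < 0)
    (hgB : ∀ t ∈ Ici t₀, f t ≤ A → g t = B → deriv g t < 0) :
    ∀ t ∈ Ici t₀, f t ≤ A ∧ g t ≤ B := by
  intro t ht
  set s := f ⁻¹' Iic A ∩ g ⁻¹' Iic B
  have hsublevel : ∀ h : ℝ → ℝ, (∀ t ∈ Ici t₀, DifferentiableAt ℝ h t) →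
      ∀ C, IsClosed (Icc t₀ t ∩ h ⁻¹' Iic C) := fun h hh C ↦
    ContinuousOn.preimage_isClosed_of_isClosed
      (fun x hx ↦ (hh x hx.1).continuousAt.continuousWithinAt) isClosed_Icc isClosed_Iic
  have hclosed : IsClosed (s ∩ Icc t₀ t) := by
    rw [inter_inter_distrib_right, inter_comm (f ⁻¹' _), inter_comm (g ⁻¹' _)]
    exact (hsublevel f hf A).inter (hsublevel g hg B)
  refine IsClosed.Icc_subset_of_forall_mem_nhdsWithin hclosed ⟨hf₀, hg₀⟩ ?_ ⟨ht, le_rfl⟩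
  rintro x ⟨⟨hfx, hgx⟩, hx, -⟩
  exact (eventually_nhdsGT_le_of_deriv_neg (hf x hx) hfx (hfA x hx · hgx)).and
    (eventually_nhdsGT_le_of_deriv_neg (hg x hx) hgx (hgB x hx hfx))

theorem le_mul_exp_of_deriv_le_mul {f : ℝ → ℝ} {K t₀ : ℝ}
    (hf : ∀ t ∈ Ici t₀, DifferentiableAt ℝ f t) (hdf : ∀ t ∈ Ici t₀, deriv f t ≤ K * f t) :
    ∀ t ∈ Ici t₀, f t ≤ f t₀ * exp (K * (t - t₀)) := by
  intro t ht
  have := le_gronwallBound_of_liminf_deriv_right_le (f' := deriv f) (ε := 0)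
    (fun x hx ↦ (hf x hx.1).continuousAt.continuousWithinAt)
    (fun x hx r hr ↦ (hf x hx.1).hasDerivAt.hasDerivWithinAt.liminf_right_slope_le hr) le_rfl
    (fun x hx ↦ by simpa using hdf x hx.1) t ⟨ht, le_rfl⟩
  rwa [gronwallBound_ε0] at this

theorem tendsto_zero_of_deriv_le_neg_mul {f : ℝ → ℝ} {k t₀ : ℝ} (hk : 0 < k)
    (hf₀ : ∀ t ∈ Ici t₀, 0 ≤ f t) (hf : ∀ t ∈ Ici t₀, DifferentiableAt ℝ f t)
    (hdf : ∀ t ∈ Ici t₀, deriv f t ≤ -k * f t) : Tendsto f atTop (𝓝 0) := by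
  have hexp : Tendsto (fun t ↦ f t₀ * exp (-k * (t - t₀))) atTop (𝓝 0) := by
    have : Tendsto (fun t ↦ -k * (t - t₀)) atTop atBot := by
      simpa [Function.comp_def, sub_eq_add_neg] using tendsto_neg_atTop_atBot.comp
        ((tendsto_atTop_add_const_right _ (-t₀) tendsto_id).const_mul_atTop hk)
    simpa using (tendsto_exp_atBot.comp this).const_mul (f t₀)
  refine tendsto_of_tendsto_of_tendsto_of_le_of_le' tendsto_const_nhds hexp ?_ ?_ <;>
    filter_upwards [eventually_ge_atTop t₀] with t ht
  exacts [hf₀ t ht, le_mul_exp_of_deriv_le_mul hf hdf t ht]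

theorem tendsto_zero_of_deriv_le_cooperative {u v : ℝ → ℝ} {a b c e t₀ : ℝ}
    (ha : 0 ≤ a) (hb : 0 ≤ b) (hc : 0 ≤ c) (he : 0 ≤ e) (hstab : a * b < c * e)
    (hu₀ : ∀ t ∈ Ici t₀, 0 ≤ u t) (hv₀ : ∀ t ∈ Ici t₀, 0 ≤ v t)
    (hud : ∀ t ∈ Ici t₀, DifferentiableAt ℝ u t) (hvd : ∀ t ∈ Ici t₀, DifferentiableAt ℝ v t)
    (hu' : ∀ t ∈ Ici t₀, deriv u t ≤ a * v t - c * u t)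
    (hv' : ∀ t ∈ Ici t₀, deriv v t ≤ b * u t - e * v t) :
    Tendsto u atTop (𝓝 0) ∧ Tendsto v atTop (𝓝 0) := by
  have hce : 0 < c * e := (mul_nonneg ha hb).trans_lt hstab
  have hc0 : 0 < c := lt_of_le_of_ne hc (by rintro rfl; simp at hce)
  have he0 : 0 < e := lt_of_le_of_ne he (by rintro rfl; simp at hce)
  set κ := c * e - a * b
  set S := a + b + c + e
  have hκ : 0 < κ := sub_pos.mpr hstab
  have hS : 0 < S := by linarith
  -- The weights `b + e` and `a + c` make both coefficients of `deriv E` equal to `-κ`.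
  set E : ℝ → ℝ := fun t ↦ (b + e) * u t + (a + c) * v t
  have hE : ∀ t ∈ Ici t₀, HasDerivAt E ((b + e) * deriv u t + (a + c) * deriv v t) t :=
    fun t ht ↦ ((hud t ht).hasDerivAt.const_mul _).add ((hvd t ht).hasDerivAt.const_mul _)
  have hdE : ∀ t ∈ Ici t₀, deriv E t ≤ -(κ / S) * E t := by
    intro t ht
    have hE_le : E t ≤ S * (u t + v t) := by nlinarith [hu₀ t ht, hv₀ t ht]
    calc deriv E t = (b + e) * deriv u t + (a + c) * deriv v t := (hE t ht).deriv
      _ ≤ (b + e) * (a * v t - c * u t) + (a + c) * (b * u t - e * v t) :=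
        add_le_add (mul_le_mul_of_nonneg_left (hu' t ht) (by linarith))
          (mul_le_mul_of_nonneg_left (hv' t ht) (by linarith))
      _ = -(κ / S) * (S * (u t + v t)) := by field_simp; ring
      _ ≤ -(κ / S) * E t := by
        nlinarith [mul_le_mul_of_nonneg_left hE_le (div_pos hκ hS).le]
  have hE0 : Tendsto E atTop (𝓝 0) :=
    tendsto_zero_of_deriv_le_neg_mul (div_pos hκ hS)
      (fun t ht ↦ by nlinarith [hu₀ t ht, hv₀ t ht]) (fun t ht ↦ (hE t ht).differentiableAt) hdE
  have hsqueeze : ∀ {f : ℝ → ℝ} {w : ℝ}, 0 < w → (∀ t ∈ Ici t₀, 0 ≤ f t) →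
      (∀ t ∈ Ici t₀, w * f t ≤ E t) → Tendsto f atTop (𝓝 0) := fun {f w} hw hf₀ hfE ↦
    tendsto_of_tendsto_of_tendsto_of_le_of_le' tendsto_const_nhds
      (by simpa using hE0.div_const w) (eventually_ge_atTop t₀ |>.mono hf₀)
      (eventually_ge_atTop t₀ |>.mono fun t ht ↦ (le_div_iff₀' hw).mpr (hfE t ht))
  exact ⟨hsqueeze (w := b + e) (by linarith) hu₀ fun t ht ↦ by nlinarith [hv₀ t ht],
    hsqueeze (w := a + c) (by linarith) hv₀ fun t ht ↦ by nlinarith [hu₀ t ht]⟩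

theorem stmt13_general (a d_c d_b d K_w M : ℝ)
    (ha : d_c < a) (hdc : 0 < d_c) (hdb : 0 < d_b) (hd : 0 < d)
    (hM : 0 < M)
    (hpar : M * K_w * (1 + d_c / a) ^ 2 ≤ (d_b + d) * (d_c / a) ^ 2)
    (u v w : ℝ → ℝ)
    (hu0 : ∀ t, 0 ≤ t → 0 ≤ u t) (hv0 : ∀ t, 0 ≤ t → 0 ≤ v t)
    (hw : ∀ t, 0 ≤ t → 0 ≤ w t ∧ w t ≤ K_w)
    (hud : ∀ t, 0 ≤ t → DifferentiableAt ℝ u t)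
    (hvd : ∀ t, 0 ≤ t → DifferentiableAt ℝ v t)
    (hu'le : ∀ t, 0 ≤ t → deriv u t ≤ a * v t - d_c * u t)
    (hv' : ∀ t, 0 ≤ t → deriv v t = -(d_b + d) * v t + (u t) ^ 2 * w t)
    (hui : u 0 ≤ M) (hvi : v 0 < (d_c / a) ^ 2 * M) :
    Filter.Tendsto u Filter.atTop (nhds 0) ∧
    Filter.Tendsto v Filter.atTop (nhds 0) := by
  have ha₀ : 0 < a := hdc.trans ha
  have hdbd : 0 < d_b + d := add_pos hdb hd
  have hMK₀ : 0 ≤ M * K_w := mul_nonneg hM.le ((hw 0 le_rfl).1.trans (hw 0 le_rfl).2)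
  set r := d_c / a
  have hr₀ : 0 < r := div_pos hdc ha₀
  have hr₁ : r < 1 := (div_lt_one ha₀).mpr ha
  have har : a * r = d_c := mul_div_cancel₀ _ ha₀.ne'
  have hMK : M * K_w < (d_b + d) * r ^ 2 := by
    nlinarith [mul_pos hdbd (pow_pos hr₀ 2),
      mul_nonneg hMK₀ (by positivity : (0 : ℝ) ≤ 2 * r + r ^ 2)]
  have hsource : ∀ t, 0 ≤ t → u t ≤ M → u t ^ 2 * w t ≤ M * K_w * u t := fun t ht hu ↦ by
    have := mul_le_mul hu (hw t ht).2 (hw t ht).1 hM.le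
    nlinarith [hu0 t ht]
  have hbox : ∀ t ∈ Ici 0, u t ≤ M ∧ v t ≤ r ^ 2 * M :=
    le_and_le_of_deriv_neg_on_faces hud hvd hui hvi.le
      (fun t ht hu hv ↦ by
        have hvr : a * (r ^ 2 * M) = d_c * M * r := by rw [← har]; ring
        nlinarith [hu'le t ht, mul_le_mul_of_nonneg_left hv ha₀.le,
          mul_lt_mul_of_pos_left hr₁ (mul_pos hdc hM)])
      (fun t ht hu hv ↦ by
        nlinarith [hv' t ht, hsource t ht hu, mul_le_mul_of_nonneg_left hu hMK₀])
  refine tendsto_zero_of_deriv_le_cooperative ha₀.le hMK₀ hdc.le hdbd.le ?_ hu0 hv0 hud hvd hu'le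
    fun t ht ↦ by linarith [hv' t ht, hsource t ht (hbox t ht).1]
  calc a * (M * K_w) < a * ((d_b + d) * r ^ 2) := mul_lt_mul_of_pos_left hMK ha₀
    _ ≤ a * r * (d_b + d) := by nlinarith [mul_pos ha₀ hdbd]
    _ = d_c * (d_b + d) := by rw [har]

/-- Pointwise extinction: under the parameter condition and initial bounds,
`u(t) → 0` and `v(t) → 0` as `t → ∞`. -/
theorem stmt13 (a d_c d_b d K_w M : ℝ)
    (ha : d_c < a) (hdc : 0 < d_c) (hdb : 0 < d_b) (hd : 0 < d)
    (hKw : 0 < K_w) (hM : 0 < M)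
    (hpar : M * K_w * (1 + d_c / a) ^ 2 ≤ (d_b + d) * (d_c / a) ^ 2)
    (u v w : ℝ → ℝ)
    (hu0 : ∀ t, 0 ≤ t → 0 ≤ u t) (hv0 : ∀ t, 0 ≤ t → 0 ≤ v t)
    (hw : ∀ t, 0 ≤ t → 0 ≤ w t ∧ w t ≤ K_w)
    (hud : ∀ t, 0 ≤ t → DifferentiableAt ℝ u t)
    (hvd : ∀ t, 0 ≤ t → DifferentiableAt ℝ v t)
    (hu'le : ∀ t, 0 ≤ t → deriv u t ≤ a * v t - d_c * u t)
    (hu' : ∀ t, 0 ≤ t → deriv u t = (a * v t / (u t + v t) - d_c) * u t)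
    (hv' : ∀ t, 0 ≤ t → deriv v t = -(d_b + d) * v t + (u t) ^ 2 * w t)
    (hui : u 0 ≤ M) (hvi : v 0 < (d_c / a) ^ 2 * M) :
    Filter.Tendsto u Filter.atTop (nhds 0) ∧
    Filter.Tendsto v Filter.atTop (nhds 0) :=
  stmt13_general a d_c d_b d K_w M ha hdc hdb hd hM hpar u v w hu0 hv0 hw hud hvd hu'le hv' hui hvi
end

section
/- Let q(x,λ) = det(A(x) − λI)/det(A₁₂ − λI), where A(x) is the 3×3 matrix of the linearization at a continuous positive steady state (with entries a₂₃(x) = K²/W(x)², a₃₃(x) = −d_g − K²/W(x)², other entries constant), λ₀ > 0 the positive eigenvalue of A₁₂, det(A₁₂ − λI) < 0 for λ ∈ [0, λ₀), det(A − λI) < 0 for all λ ≥ 0, and R(λ₀) = a₃₁ a₁₂ − a₃₂(a₁₁ − λ₀) < 0, with W continuous and bounded away from 0 and ∞ on [0,1]. Then there is ε > 0 such that for all λ ∈ (λ₀ − ε, λ₀), ω(λ) := min_{x∈[0,1]} q(x,λ) > 0, and ω(λ) → +∞ as λ → λ₀⁻. -/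
open Set Filter Topology

/-!
Near `λ₀` from the left, `p` tends to `0` through negative values while `R` stays near
`R(λ₀) < 0`, so `R/p → +∞`. Since `a₂₃ ≥ c > 0` and `|a₃₃| ≤ C`, every `q(x, λ)` with
`x ∈ [0, 1]` is at least `c · R(λ)/p(λ) − C − λ₀` once `R/p ≥ 0`, and this uniform lower
bound drives the infimum `ω(λ)` to `+∞`; in particular `ω > 0` on a left neighbourhood of `λ₀`.
-/

lemma exists_Ioo_sub_subset_of_mem_nhdsLT {α : Type*} [AddCommGroup α] [LinearOrder α]
    [IsOrderedAddMonoid α] [TopologicalSpace α] [OrderTopology α] [NoMinOrder α]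
    {a : α} {s : Set α} (hs : s ∈ 𝓝[<] a) : ∃ ε > 0, Ioo (a - ε) a ⊆ s := by
  obtain ⟨l, hl, hsub⟩ := mem_nhdsLT_iff_exists_Ioo_subset.1 hs
  exact ⟨a - l, sub_pos.2 hl, by rwa [sub_sub_cancel]⟩

lemma tendsto_nhdsLT_zero_of_neg_on_Ico {α β : Type*} [LinearOrder α] [TopologicalSpace α]
    [OrderTopology α] [Zero β] [Preorder β] [TopologicalSpace β] {p : α → β} {a b : α} (hab : a < b)
    (hp : ContinuousWithinAt p (Iio b) b) (hb : p b = 0) (hneg : ∀ l ∈ Ico a b, p l < 0) :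
    Tendsto p (𝓝[<] b) (𝓝[<] 0) := by
  refine tendsto_nhdsWithin_iff.2 ⟨hb ▸ hp.tendsto, ?_⟩
  filter_upwards [Ioo_mem_nhdsLT hab] with l hl
  exact hneg l (Ioo_subset_Ico_self hl)

lemma tendsto_div_atTop_of_tendsto_nhdsLT_zero {α : Type*} {l : Filter α} {f g : α → ℝ}
    {r : ℝ} (hr : r < 0) (hf : Tendsto f l (𝓝 r)) (hg : Tendsto g l (𝓝[<] 0)) :
    Tendsto (fun x => f x / g x) l atTop := by
  simpa only [div_eq_mul_inv, Function.comp_def] using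
    hf.neg_mul_atBot hr (tendsto_inv_nhdsLT_zero.comp hg)

lemma tendsto_sInf_image_atTop_of_eventually_le {ι α : Type*} {l : Filter ι}
    {f : ι → α → ℝ} {g : ι → ℝ} {s : Set α} (hs : s.Nonempty) (hg : Tendsto g l atTop)
    (hgf : ∀ᶠ i in l, ∀ x ∈ s, g i ≤ f i x) :
    Tendsto (fun i => sInf (f i '' s)) l atTop :=
  tendsto_atTop_mono' l (hgf.mono fun _ hi => le_csInf (hs.image _) (forall_mem_image.2 hi)) hg

/-- Step 1 of the instability proof: for `q(x,λ) = a₂₃(x) R(λ)/p(λ) + a₃₃(x) − λ`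
with `a₂₃ ≥ c > 0`, `a₃₃` bounded, `R` continuous with `R(λ₀) < 0`, and
`p < 0` on `[0, λ₀)` with `p(λ₀) = 0`, the minimum `ω(λ) = min_x q(x,λ)` is positive
for `λ` slightly below `λ₀` and `ω(λ) → +∞` as `λ → λ₀⁻`. -/
theorem stmt18 (lam0 c Cb : ℝ) (hlam0 : 0 < lam0) (hc : 0 < c)
    (R p : ℝ → ℝ) (hR : Continuous R) (hp : Continuous p)
    (hpneg : ∀ l ∈ Set.Ico (0:ℝ) lam0, p l < 0) (hp0 : p lam0 = 0)
    (hRlam0 : R lam0 < 0)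
    (a23 a33 : ℝ → ℝ)
    (ha23 : ∀ x ∈ Set.Icc (0:ℝ) 1, c ≤ a23 x)
    (ha33 : ∀ x ∈ Set.Icc (0:ℝ) 1, |a33 x| ≤ Cb) :
    let q : ℝ → ℝ → ℝ := fun x l => a23 x * (R l / p l) + a33 x - l
    let ω : ℝ → ℝ := fun l => sInf ((fun x => q x l) '' Set.Icc (0:ℝ) 1)
    (∃ ε > 0, ∀ l ∈ Set.Ioo (lam0 - ε) lam0, 0 < ω l) ∧
    Filter.Tendsto ω (nhdsWithin lam0 (Set.Iio lam0)) Filter.atTop := by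
  intro q ω
  have hRp : Tendsto (fun l => R l / p l) (𝓝[<] lam0) atTop :=
    tendsto_div_atTop_of_tendsto_nhdsLT_zero hRlam0 hR.continuousWithinAt.tendsto
      (tendsto_nhdsLT_zero_of_neg_on_Ico hlam0 hp.continuousWithinAt hp0 hpneg)
  have hbound : Tendsto (fun l => c * (R l / p l) - Cb - lam0) (𝓝[<] lam0) atTop :=
    tendsto_atTop_add_const_right _ _ <|
      tendsto_atTop_add_const_right _ _ (hRp.const_mul_atTop hc)
  have hq : ∀ᶠ l in 𝓝[<] lam0, ∀ x ∈ Icc (0:ℝ) 1, c * (R l / p l) - Cb - lam0 ≤ q x l := by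
    filter_upwards [self_mem_nhdsWithin, hRp.eventually_ge_atTop 0] with l hl hRp_nonneg x hx
    have := mul_le_mul_of_nonneg_right (ha23 x hx) hRp_nonneg
    have := neg_le_of_abs_le (ha33 x hx)
    simp only [q]
    linarith [mem_Iio.1 hl]
  have hω : Tendsto ω (𝓝[<] lam0) atTop :=
    tendsto_sInf_image_atTop_of_eventually_le (nonempty_Icc.2 zero_le_one) hbound hq
  exact ⟨exists_Ioo_sub_subset_of_mem_nhdsLT (hω.eventually_gt_atTop 0), hω⟩
end
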